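/- Let H be a Hopf algebra over a commutative ring R with antipode S, and let X : H → H be a multiplicative derivation, i.e. X ∘ μ = μ ∘ (X ⊗ id + id ⊗ X) and (X ⊗ id + id ⊗ X) ∘ Δ = Δ ∘ X. Then X is compatible with the antipode: S ∘ X = X ∘ S. -/

import Mathlib

open TensorProduct

section

variable {R H : Type*} [CommRing R] [Ring H] [HopfAlgebra R H]

/-- A derivation of `H`: `X ∘ μ = μ ∘ (X ⊗ id + id ⊗ X)`. -/
def IsDerivation (X : H →ₗ[R] H) : Prop :=
  X ∘ₗ LinearMap.mul' R H =
    LinearMap.mul' R H ∘ₗ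
      (TensorProduct.map X LinearMap.id + TensorProduct.map LinearMap.id X)

/-- A multiplicative linear map of `H`: `(X ⊗ id + id ⊗ X) ∘ Δ = Δ ∘ X`. -/
def IsMultiplicative (X : H →ₗ[R] H) : Prop :=
  (TensorProduct.map X LinearMap.id + TensorProduct.map LinearMap.id X) ∘ₗ
      Coalgebra.comul = Coalgebra.comul ∘ₗ X

/-- Convolution of linear endomorphisms of a Hopf algebra. -/
noncomputable def MDconv (f g : H →ₗ[R] H) : H →ₗ[R] H :=
  LinearMap.mul' R H ∘ₗ TensorProduct.map f g ∘ₗ Coalgebra.comul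

/-- The convolution unit `η ∘ ε`. -/
noncomputable def MDe : H →ₗ[R] H := Algebra.linearMap R H ∘ₗ Coalgebra.counit

lemma MDconv_id_unit : MDconv (LinearMap.id) (MDe (R := R) (H := H)) = LinearMap.id := by
  unfold MDconv MDe
  have h1 : TensorProduct.map (LinearMap.id (R := R) (M := H))
      (Algebra.linearMap R H ∘ₗ Coalgebra.counit) =
      (Algebra.linearMap R H).lTensor H ∘ₗ (Coalgebra.counit (R := R) (A := H)).lTensor H := by
    rw [← LinearMap.lTensor_comp]; rfl
  rw [h1]
  simp only [LinearMap.comp_assoc]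
  rw [Coalgebra.lTensor_counit_comp_comul]
  ext a
  simp

lemma MDmul_map_unit (f : H →ₗ[R] H) :
    LinearMap.mul' R H ∘ₗ TensorProduct.map f (MDe (R := R) (H := H)) =
      f ∘ₗ LinearMap.mul' R H ∘ₗ TensorProduct.map LinearMap.id (MDe (R := R) (H := H)) := by
  ext a b
  simp [MDe, Algebra.algebraMap_eq_smul_one]

lemma MDconv_unit_right (f : H →ₗ[R] H) : MDconv f (MDe (R := R) (H := H)) = f := by
  have step : MDconv f (MDe (R := R) (H := H))
      = f ∘ₗ MDconv LinearMap.id (MDe (R := R) (H := H)) := by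
    unfold MDconv
    rw [← LinearMap.comp_assoc, MDmul_map_unit, LinearMap.comp_assoc, LinearMap.comp_assoc]
  rw [step, MDconv_id_unit, LinearMap.comp_id]

lemma MDconv_assoc (f g h : H →ₗ[R] H) :
    MDconv (MDconv f g) h = MDconv f (MDconv g h) := by
  have e1 : TensorProduct.map (LinearMap.mul' R H ∘ₗ TensorProduct.map f g ∘ₗ
      (Coalgebra.comul (R := R) (A := H))) h =
      (LinearMap.mul' R H).rTensor H ∘ₗ TensorProduct.map (TensorProduct.map f g) h ∘ₗ
        (Coalgebra.comul (R := R) (A := H)).rTensor H := by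
    ext a b; simp
  have e2 : TensorProduct.map f (LinearMap.mul' R H ∘ₗ TensorProduct.map g h ∘ₗ
      (Coalgebra.comul (R := R) (A := H))) =
      (LinearMap.mul' R H).lTensor H ∘ₗ TensorProduct.map f (TensorProduct.map g h) ∘ₗ
        (Coalgebra.comul (R := R) (A := H)).lTensor H := by
    ext a b; simp
  have hC : LinearMap.mul' R H ∘ₗ (LinearMap.mul' R H).rTensor H ∘ₗ
        TensorProduct.map (TensorProduct.map f g) h =
      (LinearMap.mul' R H ∘ₗ (LinearMap.mul' R H).lTensor H ∘ₗ
        TensorProduct.map f (TensorProduct.map g h)) ∘ₗ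
          (TensorProduct.assoc R H H H).toLinearMap := by
    ext a b c; simp [mul_assoc]
  calc MDconv (MDconv f g) h
      = (LinearMap.mul' R H ∘ₗ (LinearMap.mul' R H).rTensor H ∘ₗ
          TensorProduct.map (TensorProduct.map f g) h) ∘ₗ
          ((Coalgebra.comul (R := R) (A := H)).rTensor H ∘ₗ Coalgebra.comul) := by
        unfold MDconv; rw [e1]; simp only [LinearMap.comp_assoc]
    _ = (LinearMap.mul' R H ∘ₗ (LinearMap.mul' R H).lTensor H ∘ₗ
          TensorProduct.map f (TensorProduct.map g h)) ∘ₗ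
          ((TensorProduct.assoc R H H H).toLinearMap ∘ₗ
            (Coalgebra.comul (R := R) (A := H)).rTensor H ∘ₗ Coalgebra.comul) := by
        rw [hC]; simp only [LinearMap.comp_assoc]
    _ = (LinearMap.mul' R H ∘ₗ (LinearMap.mul' R H).lTensor H ∘ₗ
          TensorProduct.map f (TensorProduct.map g h)) ∘ₗ
          ((Coalgebra.comul (R := R) (A := H)).lTensor H ∘ₗ Coalgebra.comul) := by
        rw [Coalgebra.coassoc]
    _ = MDconv f (MDconv g h) := by
        unfold MDconv; rw [e2]; simp only [LinearMap.comp_assoc]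

lemma MDconv_antipode_id :
    MDconv (HopfAlgebra.antipode (R := R)) (LinearMap.id) = MDe (R := R) (H := H) := by
  unfold MDconv MDe
  have h1 : TensorProduct.map (HopfAlgebra.antipode (R := R) (A := H)) LinearMap.id =
      (HopfAlgebra.antipode (R := R) (A := H)).rTensor H := rfl
  rw [h1, HopfAlgebra.mul_antipode_rTensor_comul]

lemma MDconv_id_antipode :
    MDconv (LinearMap.id) (HopfAlgebra.antipode (R := R)) = MDe (R := R) (H := H) := by
  unfold MDconv MDe
  have h1 : TensorProduct.map LinearMap.id (HopfAlgebra.antipode (R := R) (A := H)) =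
      (HopfAlgebra.antipode (R := R) (A := H)).lTensor H := rfl
  rw [h1, HopfAlgebra.mul_antipode_lTensor_comul]

/-- The counit vanishes on the image of a multiplicative map. -/
lemma MDcounit_comp (X : H →ₗ[R] H) (hm : IsMultiplicative X) :
    Coalgebra.counit (R := R) ∘ₗ X = 0 := by
  set ε := Coalgebra.counit (R := R) (A := H) with hε
  set φ : H ⊗[R] H →ₗ[R] R := LinearMap.mul' R R ∘ₗ TensorProduct.map ε ε with hφ
  have key : ∀ c : H →ₗ[R] R,
      LinearMap.mul' R R ∘ₗ TensorProduct.map c ε ∘ₗ Coalgebra.comul = c := by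
    intro c
    have e : TensorProduct.map c ε = c.rTensor R ∘ₗ ε.lTensor H := by ext a b; simp [hε]
    rw [e]; simp only [LinearMap.comp_assoc]
    rw [hε, Coalgebra.lTensor_counit_comp_comul]; ext a; simp
  have key' : ∀ c : H →ₗ[R] R,
      LinearMap.mul' R R ∘ₗ TensorProduct.map ε c ∘ₗ Coalgebra.comul = c := by
    intro c
    have e : TensorProduct.map ε c = c.lTensor R ∘ₗ ε.rTensor H := by ext a b; simp [hε]
    rw [e]; simp only [LinearMap.comp_assoc]
    rw [hε, Coalgebra.rTensor_counit_comp_comul]; ext a; simp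
  have h2 : φ ∘ₗ (TensorProduct.map X LinearMap.id + TensorProduct.map LinearMap.id X) ∘ₗ
      Coalgebra.comul = φ ∘ₗ Coalgebra.comul ∘ₗ X := by
    rw [← hm]
  have lhs1 : φ ∘ₗ TensorProduct.map X LinearMap.id =
      LinearMap.mul' R R ∘ₗ TensorProduct.map (ε ∘ₗ X) ε := by ext a b; simp [hφ, hε]
  have lhs2 : φ ∘ₗ TensorProduct.map LinearMap.id X =
      LinearMap.mul' R R ∘ₗ TensorProduct.map ε (ε ∘ₗ X) := by ext a b; simp [hφ, hε]
  have hR : φ ∘ₗ Coalgebra.comul ∘ₗ X = ε ∘ₗ X := by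
    rw [← LinearMap.comp_assoc]
    congr 1
    rw [hφ, LinearMap.comp_assoc]
    exact key' ε
  have hL : φ ∘ₗ (TensorProduct.map X LinearMap.id + TensorProduct.map LinearMap.id X) ∘ₗ
      Coalgebra.comul = ε ∘ₗ X + ε ∘ₗ X := by
    rw [← LinearMap.comp_assoc, LinearMap.comp_add, lhs1, lhs2, LinearMap.add_comp,
      LinearMap.comp_assoc, LinearMap.comp_assoc, key (ε ∘ₗ X), key' (ε ∘ₗ X)]
  rw [hL, hR] at h2
  exact add_eq_right.mp h2

/-- A derivation kills the unit. -/
lemma MDone (X : H →ₗ[R] H) (hd : IsDerivation X) : X 1 = 0 := by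
  have := LinearMap.congr_fun hd ((1 : H) ⊗ₜ[R] (1 : H))
  simpa using this

/-- A multiplicative derivation of a Hopf algebra is compatible with the
antipode: `S ∘ X = X ∘ S`. -/
theorem multiplicative_derivation_commutes_with_antipode
    (X : H →ₗ[R] H) (hd : IsDerivation X) (hm : IsMultiplicative X) :
    HopfAlgebra.antipode (R := R) ∘ₗ X = X ∘ₗ HopfAlgebra.antipode (R := R) := by
  set S := HopfAlgebra.antipode (R := R) (A := H) with hS
  -- `MDe ∘ X = 0` and `X ∘ MDe = 0`
  have hεX : MDe (R := R) (H := H) ∘ₗ X = 0 := by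
    unfold MDe
    rw [LinearMap.comp_assoc, MDcounit_comp X hm, LinearMap.comp_zero]
  have hXε : X ∘ₗ MDe (R := R) (H := H) = 0 := by
    ext a
    simp [MDe, Algebra.algebraMap_eq_smul_one, MDone X hd]
  -- equation A
  have decompA : TensorProduct.map (S ∘ₗ X) LinearMap.id + TensorProduct.map S X =
      TensorProduct.map S LinearMap.id ∘ₗ
        (TensorProduct.map X LinearMap.id + TensorProduct.map LinearMap.id X) := by
    ext a b; simp
  have eqA : MDconv (S ∘ₗ X) LinearMap.id + MDconv S X = 0 := by
    have : MDconv (S ∘ₗ X) LinearMap.id + MDconv S X =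
        LinearMap.mul' R H ∘ₗ
          (TensorProduct.map (S ∘ₗ X) LinearMap.id + TensorProduct.map S X) ∘ₗ
            Coalgebra.comul := by
      unfold MDconv
      rw [LinearMap.add_comp, LinearMap.comp_add]
    rw [this, decompA, LinearMap.comp_assoc, hm, ← LinearMap.comp_assoc,
      ← LinearMap.comp_assoc]
    have this2 : (LinearMap.mul' R H ∘ₗ TensorProduct.map S LinearMap.id) ∘ₗ
        Coalgebra.comul = MDe (R := R) (H := H) := by
      rw [LinearMap.comp_assoc]; exact MDconv_antipode_id
    rw [this2, hεX]
  -- equation B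
  have decompB : (TensorProduct.map X LinearMap.id + TensorProduct.map LinearMap.id X) ∘ₗ
      TensorProduct.map S LinearMap.id =
      TensorProduct.map (X ∘ₗ S) LinearMap.id + TensorProduct.map S X := by
    ext a b; simp
  have eqB : MDconv (X ∘ₗ S) LinearMap.id + MDconv S X = 0 := by
    have h0 : X ∘ₗ MDconv S LinearMap.id = 0 := by
      rw [MDconv_antipode_id, hXε]
    unfold MDconv at h0
    simp only [← LinearMap.comp_assoc] at h0
    rw [hd, LinearMap.comp_assoc (TensorProduct.map S LinearMap.id)
        (TensorProduct.map X LinearMap.id + TensorProduct.map LinearMap.id X)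
        (LinearMap.mul' R H), decompB, LinearMap.comp_add, LinearMap.add_comp] at h0
    unfold MDconv
    simp only [← LinearMap.comp_assoc]
    exact h0
  have key : MDconv (S ∘ₗ X) LinearMap.id = MDconv (X ∘ₗ S) LinearMap.id := by
    have := eqA.trans eqB.symm
    exact add_right_cancel this
  calc S ∘ₗ X = MDconv (S ∘ₗ X) (MDe (R := R) (H := H)) := (MDconv_unit_right _).symm
    _ = MDconv (S ∘ₗ X) (MDconv LinearMap.id S) := by rw [MDconv_id_antipode]
    _ = MDconv (MDconv (S ∘ₗ X) LinearMap.id) S := (MDconv_assoc _ _ _).symm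
    _ = MDconv (MDconv (X ∘ₗ S) LinearMap.id) S := by rw [key]
    _ = MDconv (X ∘ₗ S) (MDconv LinearMap.id S) := MDconv_assoc _ _ _
    _ = X ∘ₗ S := by rw [MDconv_id_antipode, MDconv_unit_right]

end
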